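/- arXiv:2004.05501 — 3 statements merged into one kernel-verified Lean document; each statement's English description precedes it below -/
import Mathlib

section
/- Let (E, σ, θ) be a plane graph with labeling t : E → Fin 3 such that (σ∘θ)^3 = id, t(θ(e)) = t(e) for all e, and t(σ(θ(e))) ≠ t(e) for all e. Let H be a subgroup of the permutation group of E such that every ρ ∈ H commutes with σ and with θ and satisfies t(ρ(e)) = t(e) for all e. Then on the quotient Ē = E/H with induced maps σ̄(ē) = (σ(e))‾ and θ̄(ē) = (θ(e))‾, every orbit of σ̄∘θ̄ has exactly 3 elements. In other words, the quotient plane graph (the double chamber decoration) is a plane triangulation. -/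
/-! Since `σ` and `θ` commute with `H`, they descend to permutations of `E ⧸ H`, and so does
`σθ`, whose cube is still the identity. It has no fixed point there: `t` is `H`-invariant, so
`⟦σθ e⟧ = ⟦e⟧` would force `t (σθ e) = t e`. As `3` is prime, every orbit of such a permutation
has exactly `3` elements. -/

open Equiv Function MulAction Subgroup

namespace Equiv.Perm

variable {α : Type*}

theorem ncard_setOf_zpow_apply_eq (g : Perm α) (x : α) :
    {y | ∃ n : ℤ, (g ^ n) x = y}.ncard = minimalPeriod g x := by
  have horbit : {y | ∃ n : ℤ, (g ^ n) x = y} = orbit (zpowers g) x := by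
    ext y
    simp only [Set.mem_ofPred_eq, mem_orbit_iff, Subtype.exists, mem_zpowers_iff,
      Subgroup.mk_smul, Perm.smul_def, exists_prop, exists_exists_eq_and]
  rw [horbit, ← Nat.card_coe_set_eq, Nat.card_congr (orbitZPowersEquiv g x), Nat.card_zmod]
  rfl

theorem ncard_setOf_zpow_apply_eq_prime {p : ℕ} [Fact p.Prime] {g : Perm α} (hg : g ^ p = 1)
    {x : α} (hx : g x ≠ x) : {y | ∃ n : ℤ, (g ^ n) x = y}.ncard = p := by
  rw [ncard_setOf_zpow_apply_eq]
  refine minimalPeriod_eq_prime ?_ hx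
  rw [IsPeriodicPt, IsFixedPt, ← coe_pow, hg, coe_one, id]

end Equiv.Perm

namespace MulAction

variable {E : Type*} (H : Subgroup (Perm E))

theorem orbitRel_apply_iff_of_mem_centralizer {π : Perm E}
    (hπ : π ∈ centralizer (H : Set (Perm E))) (x y : E) :
    orbitRel H E x y ↔ orbitRel H E (π x) (π y) := by
  have hcomm (ρ : H) : (ρ : Perm E) (π y) = π ((ρ : Perm E) y) :=
    congrArg (· y) (mem_centralizer_iff.mp hπ ρ ρ.2)
  simp only [orbitRel_apply, mem_orbit_iff, Subgroup.smul_def, Perm.smul_def, hcomm,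
    π.apply_eq_iff_eq]

noncomputable def orbitRelQuotientHom :
    centralizer (H : Set (Perm E)) →* Perm (Quotient (orbitRel H E)) where
  toFun π := Quotient.congr π (orbitRel_apply_iff_of_mem_centralizer H π.2)
  map_one' := by ext q; induction q using Quotient.ind; rfl
  map_mul' π π' := by ext q; induction q using Quotient.ind; rfl

theorem orbitRelQuotientHom_mk (π : centralizer (H : Set (Perm E))) (e : E) :
    orbitRelQuotientHom H π (Quotient.mk _ e) = Quotient.mk _ ((π : Perm E) e) := rfl

theorem apply_eq_apply_of_orbitRel {β : Type*} {t : E → β}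
    (ht : ∀ ρ ∈ H, ∀ e : E, t (ρ e) = t e) {x y : E} (hxy : orbitRel H E x y) : t x = t y := by
  obtain ⟨ρ, rfl⟩ := hxy
  exact ht ρ ρ.2 y

end MulAction

theorem decoration_is_triangulation_general (E : Type*) (σ θ : Equiv.Perm E) (t : E → Fin 3)
    (h3 : (σ * θ) ^ 3 = 1)
    (htσθ : ∀ e : E, t (σ (θ e)) ≠ t e)
    (H : Subgroup (Equiv.Perm E))
    (hσ : ∀ ρ ∈ H, ρ * σ = σ * ρ)
    (hθ : ∀ ρ ∈ H, ρ * θ = θ * ρ)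
    (ht : ∀ ρ ∈ H, ∀ e : E, t (ρ e) = t e) :
    ∃ (σb θb : Equiv.Perm (Quotient (MulAction.orbitRel H E))),
      (∀ e : E, σb (Quotient.mk (MulAction.orbitRel H E) e)
          = Quotient.mk (MulAction.orbitRel H E) (σ e)) ∧
      (∀ e : E, θb (Quotient.mk (MulAction.orbitRel H E) e)
          = Quotient.mk (MulAction.orbitRel H E) (θ e)) ∧
      (∀ q : Quotient (MulAction.orbitRel H E),
        Set.ncard {x | ∃ n : ℤ, ((σb * θb) ^ n) q = x} = 3) := by
  let s : centralizer (H : Set (Perm E)) := ⟨σ, mem_centralizer_iff.mpr hσ⟩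
  let r : centralizer (H : Set (Perm E)) := ⟨θ, mem_centralizer_iff.mpr hθ⟩
  refine ⟨orbitRelQuotientHom H s, orbitRelQuotientHom H r, orbitRelQuotientHom_mk H s,
    orbitRelQuotientHom_mk H r, fun q => ?_⟩
  rw [← map_mul]
  refine Perm.ncard_setOf_zpow_apply_eq_prime ?_ ?_
  · rw [← map_pow, show (s * r) ^ 3 = 1 from Subtype.ext h3, map_one]
  · induction q using Quotient.ind with
    | _ e => exact fun h => htσθ e (apply_eq_apply_of_orbitRel H ht (Quotient.exact h))

/-- If `(E, σ, θ)` is a plane graph with labeling `t` satisfying `(σ∘θ)^3 = id`,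
`t (θ e) = t e` and `t (σ (θ e)) ≠ t e`, and `H` is a subgroup of permutations commuting with
`σ` and `θ` and preserving `t`, then on the quotient `Ē = E/H` every orbit of the induced
permutation `σ̄∘θ̄` has exactly 3 elements: the double chamber decoration is a triangulation. -/
theorem decoration_is_triangulation (E : Type*) (σ θ : Equiv.Perm E) (t : E → Fin 3)
    (h3 : (σ * θ) ^ 3 = 1)
    (htθ : ∀ e : E, t (θ e) = t e)
    (htσθ : ∀ e : E, t (σ (θ e)) ≠ t e)
    (H : Subgroup (Equiv.Perm E))
    (hσ : ∀ ρ ∈ H, ρ * σ = σ * ρ)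
    (hθ : ∀ ρ ∈ H, ρ * θ = θ * ρ)
    (ht : ∀ ρ ∈ H, ∀ e : E, t (ρ e) = t e) :
    ∃ (σb θb : Equiv.Perm (Quotient (MulAction.orbitRel H E))),
      (∀ e : E, σb (Quotient.mk (MulAction.orbitRel H E) e)
          = Quotient.mk (MulAction.orbitRel H E) (σ e)) ∧
      (∀ e : E, θb (Quotient.mk (MulAction.orbitRel H E) e)
          = Quotient.mk (MulAction.orbitRel H E) (θ e)) ∧
      (∀ q : Quotient (MulAction.orbitRel H E),
        Set.ncard {x | ∃ n : ℤ, ((σb * θb) ^ n) q = x} = 3) :=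
  decoration_is_triangulation_general E σ θ t h3 htσθ H hσ hθ ht
end

section
/- Let G be a simple graph on a finite vertex set V with at least 3 vertices such that for every vertex v, the induced subgraph of G on V \ {v} is connected (i.e., G is 2-connected). Then for any three pairwise distinct vertices v0, v1, v2 of G there exist a path p from v1 to v0 and a path q from v0 to v2 in G such that the only vertex lying on both p and q is v0. In particular, their concatenation is a simple path from v1 to v2 through v0. -/
/-!
By Whitney's theorem there are two paths `P`, `Q` from `v0` to `v1` meeting only at their
ends. Walk from `v2` towards `v0` avoiding `v1` and stop at the first vertex `z` of `P ∪ Q`;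
if `z ∈ P`, then `P` up to `z` followed by the path from `z` back to `v2`, together with `Q`,
is the required pair. The same rerouting step, applied to a neighbour `v` of `w`, extends a
pair of internally disjoint `u`–`w` paths to one of `u`–`v` paths, which proves Whitney's
theorem by induction along a walk.
-/

namespace SimpleGraph

variable {V : Type*} {G : SimpleGraph V} {u v w x : V}

namespace Walk

theorem IsPath.append {p : G.Walk u v} {q : G.Walk v w}
    (hp : p.IsPath) (hq : q.IsPath) (h : ∀ y ∈ p.support, y ∈ q.support → y = v) :
    (p.append q).IsPath := by
  rw [isPath_def, support_append]
  refine hp.support_nodup.append hq.support_nodup.tail fun y hyp hyq => ?_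
  have hyv : y = v := h y hyp (List.mem_of_mem_tail hyq)
  subst hyv
  have hq' := hq.support_nodup
  rw [← cons_tail_support] at hq'
  exact (List.nodup_cons.mp hq').1 hyq

theorem IsPath.exists_isPath_first_mem {s : Set V} {p : G.Walk u v} (hp : p.IsPath)
    (hv : v ∈ s) :
    ∃ z ∈ s, ∃ q : G.Walk u z, q.IsPath ∧ q.support ⊆ p.support ∧
      ∀ y ∈ q.support, y ∈ s → y = z := by
  induction p with
  | nil => exact ⟨_, hv, Walk.nil, .nil, by simp, by simp⟩
  | @cons u c _ hadj p ih =>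
    rw [cons_isPath_iff] at hp
    by_cases hu : u ∈ s
    · exact ⟨u, hu, Walk.nil, .nil, by simp, by simp⟩
    obtain ⟨z, hz, q, hq, hqp, hfirst⟩ := ih hp.1 hv
    refine ⟨z, hz, cons hadj q, (cons_isPath_iff _ _).2 ⟨hq, fun h => hp.2 (hqp h)⟩, ?_, ?_⟩
    · rw [support_cons, support_cons]
      exact List.cons_subset_cons u hqp
    · rintro y hy hys
      rcases List.mem_cons.mp (support_cons _ _ ▸ hy) with rfl | hy
      exacts [absurd hys hu, hfirst y hy hys]

end Walk

open Walk

theorem exists_isPath_avoiding (h : (G.induce {x}ᶜ).Connected)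
    (hu : u ≠ x) (hv : v ≠ x) : ∃ p : G.Walk u v, p.IsPath ∧ x ∉ p.support := by
  classical
  obtain ⟨p⟩ := h.preconnected ⟨u, hu⟩ ⟨v, hv⟩
  refine ⟨(p.map (Embedding.induce _).toHom).bypass, bypass_isPath _, fun hx => ?_⟩
  have hx' : x ∈ p.support.map (Embedding.induce (G := G) {x}ᶜ).toHom := by
    rw [← Walk.support_map]
    exact support_bypass_subset_support _ hx
  obtain ⟨y, -, hy⟩ := List.mem_map.mp hx'
  exact y.2 hy

theorem exists_fan_of_first_mem {P Q : G.Walk u w} (hP : P.IsPath) (hQ : Q.IsPath)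
    (hPQ : ∀ y ∈ P.support, y ∈ Q.support → y = u ∨ y = w) {z : V} (hzP : z ∈ P.support)
    {R : G.Walk v z} (hR : R.IsPath) (hwR : w ∉ R.support)
    (hfirst : ∀ y ∈ R.support, y ∈ P.support ∨ y ∈ Q.support → y = z) :
    ∃ (A : G.Walk u v) (B : G.Walk u w), A.IsPath ∧ B.IsPath ∧
      ∀ y ∈ A.support, y ∈ B.support → y = u := by
  classical
  have hzw : z ≠ w := fun h => hwR (h ▸ R.end_mem_support)
  have hwP : w ∉ (P.takeUntil z hzP).support :=
    endpoint_notMem_support_takeUntil hP hzP hzw.symm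
  refine ⟨(P.takeUntil z hzP).append R.reverse, Q, ?_, hQ, fun y hyA hyQ => ?_⟩
  · refine (hP.takeUntil hzP).append hR.reverse fun y hyP hyR => ?_
    rw [support_reverse, List.mem_reverse] at hyR
    exact hfirst y hyR (.inl (support_takeUntil_subset_support P hzP hyP))
  rcases (mem_support_append_iff _ _).mp hyA with hyP | hyR
  · refine (hPQ y (support_takeUntil_subset_support P hzP hyP) hyQ).resolve_right ?_
    rintro rfl
    exact hwP hyP
  · rw [support_reverse, List.mem_reverse] at hyR
    obtain rfl := hfirst y hyR (.inr hyQ)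
    exact (hPQ y hzP hyQ).resolve_right hzw

theorem exists_fan {P Q : G.Walk u w} (hP : P.IsPath) (hQ : Q.IsPath)
    (hPQ : ∀ y ∈ P.support, y ∈ Q.support → y = u ∨ y = w)
    {R : G.Walk v u} (hR : R.IsPath) (hwR : w ∉ R.support) :
    ∃ (A : G.Walk u v) (B : G.Walk u w), A.IsPath ∧ B.IsPath ∧
      ∀ y ∈ A.support, y ∈ B.support → y = u := by
  obtain ⟨z, hz, R', hR', hR'R, hfirst⟩ :=
    hR.exists_isPath_first_mem (s := {y | y ∈ P.support ∨ y ∈ Q.support})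
      (.inl P.start_mem_support)
  have hwR' : w ∉ R'.support := fun h => hwR (hR'R h)
  rcases hz with hzP | hzQ
  · exact exists_fan_of_first_mem hP hQ hPQ hzP hR' hwR' hfirst
  · exact exists_fan_of_first_mem hQ hP (fun y hyQ hyP => hPQ y hyP hyQ) hzQ hR' hwR'
      fun y hy hyPQ => hfirst y hy hyPQ.symm

theorem Reachable.exists_internallyDisjoint_isPath_pair (h2 : ∀ x, (G.induce {x}ᶜ).Connected)
    (h : G.Reachable u v) :
    ∃ P Q : G.Walk u v, P.IsPath ∧ Q.IsPath ∧
      ∀ y ∈ P.support, y ∈ Q.support → y = u ∨ y = v := by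
  obtain ⟨p⟩ := h.symm
  clear h
  induction p with
  | nil => exact ⟨nil, nil, .nil, .nil, by simp⟩
  | @cons v w u hvw t ih =>
    by_cases hvu : v = u
    · subst hvu
      exact ⟨nil, nil, .nil, .nil, by simp⟩
    by_cases hwu : w = u
    · subst hwu
      have hpath : (cons hvw.symm nil).IsPath := by simp [hvw.ne.symm]
      exact ⟨_, _, hpath, hpath, by simp⟩
    obtain ⟨P, Q, hP, hQ, hPQ⟩ := ih
    obtain ⟨R, hR, hwR⟩ := exists_isPath_avoiding (h2 w) hvw.ne (Ne.symm hwu)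
    obtain ⟨A, B, hA, hB, hAB⟩ := exists_fan hP hQ hPQ hR hwR
    have hvB : v ∉ B.support := fun hv => hvu (hAB v A.end_mem_support hv)
    refine ⟨A, B.concat hvw.symm, hA, hB.concat hvB _, fun y hyA hyB => ?_⟩
    rw [support_concat, List.mem_append, List.mem_singleton] at hyB
    exact hyB.imp_left (hAB y hyA)

end SimpleGraph

theorem simple_path_through_v0_general {V : Type*} (G : SimpleGraph V)
    (h2conn : ∀ v : V, (G.induce ({v}ᶜ : Set V)).Connected)
    (v0 v1 v2 : V) (h01 : v0 ≠ v1) (h02 : v0 ≠ v2) (h12 : v1 ≠ v2) :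
    ∃ (p : G.Walk v1 v0) (q : G.Walk v0 v2), p.IsPath ∧ q.IsPath ∧
      (∀ x : V, x ∈ p.support → x ∈ q.support → x = v0) ∧
      (p.append q).IsPath := by
  obtain ⟨r, -, -⟩ := SimpleGraph.exists_isPath_avoiding (h2conn v2) h02 h12
  obtain ⟨P, Q, hP, hQ, hPQ⟩ := r.reachable.exists_internallyDisjoint_isPath_pair h2conn
  obtain ⟨R, hR, hv1R⟩ := SimpleGraph.exists_isPath_avoiding (h2conn v1) h12.symm h01
  obtain ⟨q, p, hq, hp, hqp⟩ := SimpleGraph.exists_fan hP hQ hPQ hR hv1R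
  have hpq : ∀ x ∈ p.reverse.support, x ∈ q.support → x = v0 := fun x hxp hxq =>
    hqp x hxq (by simpa using hxp)
  exact ⟨p.reverse, q, hp.reverse, hq, hpq, hp.reverse.append hq hpq⟩

/-- In a 2-connected simple graph (at least 3 vertices, and deleting any single
vertex leaves a connected graph), for any three pairwise distinct vertices `v0, v1, v2` there
exist a path `p` from `v1` to `v0` and a path `q` from `v0` to `v2` meeting only in `v0`;
in particular their concatenation is a simple path from `v1` to `v2` through `v0`. -/
theorem simple_path_through_v0 {V : Type*} [Fintype V] (G : SimpleGraph V)
    (hcard : 3 ≤ Fintype.card V)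
    (h2conn : ∀ v : V, (G.induce ({v}ᶜ : Set V)).Connected)
    (v0 v1 v2 : V) (h01 : v0 ≠ v1) (h02 : v0 ≠ v2) (h12 : v1 ≠ v2) :
    ∃ (p : G.Walk v1 v0) (q : G.Walk v0 v2), p.IsPath ∧ q.IsPath ∧
      (∀ x : V, x ∈ p.support → x ∈ q.support → x = v0) ∧
      (p.append q).IsPath :=
  simple_path_through_v0_general G h2conn v0 v1 v2 h01 h02 h12
end

section
/- Let (E, σ, θ) be a plane graph (σ a permutation of E, θ a fixed-point-free involution of E). Let P1, P2 ⊆ E be such that the four sets P1, P2, θ(P1), θ(P2) are pairwise disjoint. Let C be a type and s1, s2 permutations of C. Define s : E → Perm(C) by s(e) = s2 if e ∈ P2, s(e) = s1⁻¹ if e ∈ P1, s(e) = s2⁻¹ if e ∈ θ(P2), s(e) = s1 if e ∈ θ(P1), and s(e) = id otherwise. Then the map θ_P : E × C → E × C given by θ_P(e, c) = (θ(e), s(e)(c)) is a fixed-point-free involution, and the map σ_P : E × C → E × C given by σ_P(e, c) = (σ(e), s(e)(c)) is a bijection. In particular (E × C, σ_P, θ_P) is again a plane graph. -/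
/-! The twisting permutations satisfy `s (θ e) = (s e)⁻¹` for every edge `e`: on `P1 ∪ P2` this
is read off the definition of `s`, it transfers to `θ '' (P1 ∪ P2)` because `θ` is an involution,
and off these sets both sides are `1` since their union is `θ`-invariant. This relation makes
`θ_P` an involution; `σ_P` is the shear of `σ` by the family of permutations `s`. -/

open Function

section

variable {E C : Type*} {θ : E → E} {s : E → Equiv.Perm C}

theorem Function.Involutive.perm_apply_eq_inv (hθ : Involutive θ) {P : Set E}
    (hP : ∀ e ∈ P, s (θ e) = (s e)⁻¹) (hout : ∀ e ∉ P ∪ θ '' P, s e = 1) (e : E) :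
    s (θ e) = (s e)⁻¹ := by
  have mem_image_iff {x : E} : x ∈ θ '' P ↔ θ x ∈ P :=
    Set.mem_image_iff_of_inverse hθ.leftInverse hθ.rightInverse
  by_cases heP : e ∈ P
  · exact hP e heP
  by_cases heθP : θ e ∈ P
  · have h := hP _ heθP
    rw [hθ e] at h
    rw [h, inv_inv]
  have he : e ∉ P ∪ θ '' P := by simp [mem_image_iff, heP, heθP]
  have hθe : θ e ∉ P ∪ θ '' P := by simp [mem_image_iff, hθ e, heP, heθP]
  rw [hout e he, hout _ hθe, inv_one]

theorem Function.Involutive.prod_perm_twist (hθ : Involutive θ)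
    (hs : ∀ e, s (θ e) = (s e)⁻¹) : Involutive fun x : E × C => (θ x.1, s x.1 x.2) := by
  rintro ⟨e, c⟩
  simp [hθ e, hs e]

end

theorem application_is_plane_graph_general {E C : Type*} (σ θ : Equiv.Perm E)
    (hθinv : ∀ e : E, θ (θ e) = e) (hθfpf : ∀ e : E, θ e ≠ e)
    (P1 P2 : Set E)
    (s1 s2 : Equiv.Perm C) (s : E → Equiv.Perm C)
    (hsP2 : ∀ e ∈ P2, s e = s2)
    (hsP1 : ∀ e ∈ P1, s e = s1⁻¹)
    (hsP2' : ∀ e ∈ θ '' P2, s e = s2⁻¹)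
    (hsP1' : ∀ e ∈ θ '' P1, s e = s1)
    (hselse : ∀ e : E, e ∉ P1 ∪ P2 ∪ θ '' P1 ∪ θ '' P2 → s e = 1) :
    Function.Involutive (fun x : E × C => (θ x.1, s x.1 x.2)) ∧
    (∀ x : E × C, (θ x.1, s x.1 x.2) ≠ x) ∧
    Function.Bijective (fun x : E × C => (σ x.1, s x.1 x.2)) := by
  have hθ : Involutive θ := hθinv
  have hP : ∀ e ∈ P1 ∪ P2, s (θ e) = (s e)⁻¹ := by
    rintro e (he | he)
    · rw [hsP1' _ (Set.mem_image_of_mem θ he), hsP1 e he, inv_inv]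
    · rw [hsP2' _ (Set.mem_image_of_mem θ he), hsP2 e he]
  have hout : ∀ e ∉ (P1 ∪ P2) ∪ θ '' (P1 ∪ P2), s e = 1 := by
    intro e he
    exact hselse e (by rwa [Set.image_union, ← Set.union_assoc] at he)
  refine ⟨hθ.prod_perm_twist (hθ.perm_apply_eq_inv hP hout), ?_, ?_⟩
  · exact fun x hx => hθfpf x.1 (congrArg Prod.fst hx)
  · simpa only [Equiv.prodShear_apply] using (σ.prodShear s).bijective

/-- Given a plane graph `(E, σ, θ)` (with `θ` a fixed-point-free involution),
pairwise disjoint sets `P1, P2, θ '' P1, θ '' P2`, and the family `s : E → Perm C` equal to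
`s2` on `P2`, `s1⁻¹` on `P1`, `s2⁻¹` on `θ '' P2`, `s1` on `θ '' P1`, and the identity
elsewhere, the map `θ_P (e, c) = (θ e, s e c)` is a fixed-point-free involution and
`σ_P (e, c) = (σ e, s e c)` is a bijection, so `(E × C, σ_P, θ_P)` is again a plane graph. -/
theorem application_is_plane_graph {E C : Type*} (σ θ : Equiv.Perm E)
    (hθinv : ∀ e : E, θ (θ e) = e) (hθfpf : ∀ e : E, θ e ≠ e)
    (P1 P2 : Set E)
    (hdisj : ([P1, P2, θ '' P1, θ '' P2] : List (Set E)).Pairwise Disjoint)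
    (s1 s2 : Equiv.Perm C) (s : E → Equiv.Perm C)
    (hsP2 : ∀ e ∈ P2, s e = s2)
    (hsP1 : ∀ e ∈ P1, s e = s1⁻¹)
    (hsP2' : ∀ e ∈ θ '' P2, s e = s2⁻¹)
    (hsP1' : ∀ e ∈ θ '' P1, s e = s1)
    (hselse : ∀ e : E, e ∉ P1 ∪ P2 ∪ θ '' P1 ∪ θ '' P2 → s e = 1) :
    Function.Involutive (fun x : E × C => (θ x.1, s x.1 x.2)) ∧
    (∀ x : E × C, (θ x.1, s x.1 x.2) ≠ x) ∧
    Function.Bijective (fun x : E × C => (σ x.1, s x.1 x.2)) :=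
  application_is_plane_graph_general σ θ hθinv hθfpf P1 P2 s1 s2 s hsP2 hsP1 hsP2' hsP1' hselse
end
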